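/- arXiv:2408.10459 — 3 statements merged into one kernel-verified Lean document; each statement's English description precedes it below -/
import Mathlib

section
/- Let ξ ∈ ℝ and let v, w : ℝ² → ℝ be three times continuously differentiable on an open neighborhood of the point (ξ, y). Let a⁻, a⁺ > 0 be real constants. Assume the homogeneous jump conditions at (ξ, y): v(ξ, y) = w(ξ, y) (zero jump of u) and a⁺·∂w/∂x(ξ,y) = a⁻·∂v/∂x(ξ,y) (zero jump of the flux a·∂u/∂x across the vertical interface). Then there exist constants C > 0 and δ > 0 such that for all h with 0 < h < δ, | −a⁻·v(ξ−2h, y) + 4·a⁻·v(ξ−h, y) − 3·(a⁻ + a⁺)·v(ξ, y) + 4·a⁺·w(ξ+h, y) − a⁺·w(ξ+2h, y) | ≤ C·h³. -/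
/-!
On each side of the interface expand to second order in `x` about `ξ`. The one-sided
three-point combination `4 f(ξ ± h) - f(ξ ± 2h) - 3 f(ξ)` cancels the `h²` terms and equals
`± 2h f'(ξ) + O(h³)`. Weighting the left expansion by `a⁻` and the right one by `a⁺`, the
zeroth-order terms cancel by `[u] = 0` and the first-order terms by `[a ∂ₓu] = 0`.
-/

open Set Filter Topology Asymptotics

theorem Asymptotics.IsBigO.comp_const_mul {F : Type*} [Norm F] {g : ℝ → F} {n : ℕ}
    (hg : g =O[𝓝 0] fun h => h ^ n) (c : ℝ) : (fun h => g (c * h)) =O[𝓝 0] fun h => h ^ n := by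
  have hc : Tendsto (c * ·) (𝓝 0) (𝓝 0) := by
    simpa using (continuous_const_mul c).tendsto 0
  refine (hg.comp_tendsto hc).trans ?_
  simpa [mul_pow, Function.comp_def] using isBigO_const_mul_self (c ^ n) (· ^ n) (𝓝 (0 : ℝ))

theorem Asymptotics.IsBigO.exists_bound_pow_of_pos {F : Type*} [Norm F] {g : ℝ → F} {n : ℕ}
    (hg : g =O[𝓝 0] fun h => h ^ n) :
    ∃ C > 0, ∃ δ > 0, ∀ h : ℝ, 0 < h → h < δ → ‖g h‖ ≤ C * h ^ n := by
  obtain ⟨C, hC, hCg⟩ := hg.exists_pos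
  obtain ⟨δ, hδ, hbound⟩ := Metric.eventually_nhds_iff.mp hCg.bound
  refine ⟨C, hC, δ, hδ, fun h hpos hlt => ?_⟩
  have := hbound (y := h) (by rwa [Real.dist_0_eq_abs, abs_of_pos hpos])
  rwa [norm_pow, Real.norm_of_nonneg hpos.le] at this

section Taylor

variable {E : Type*} [NormedAddCommGroup E] [NormedSpace ℝ E] {f : ℝ → E} {x : ℝ}

theorem ContDiffAt.isLittleO_sub_taylorWithinEval {n : ℕ} (hf : ContDiffAt ℝ n f x) :
    (fun z => f z - taylorWithinEval f n univ x z) =o[𝓝 x] fun z => (z - x) ^ n := by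
  obtain ⟨u, hu, hfu⟩ := hf.contDiffOn le_rfl (by simp)
  obtain ⟨r, hr, hball⟩ := Metric.mem_nhds_iff.mp hu
  have hx : x ∈ Metric.ball x r := Metric.mem_ball_self hr
  have hT : taylorWithinEval f n (Metric.ball x r) x = taylorWithinEval f n univ x := by
    funext z
    simp only [taylor_within_apply, iteratedDerivWithin_univ,
      iteratedDerivWithin_of_isOpen Metric.isOpen_ball hx]
  simpa only [Metric.isOpen_ball.nhdsWithin_eq hx, hT] using
    taylor_isLittleO (convex_ball x r) hx (hfu.mono hball)

theorem ContDiffAt.isBigO_sub_taylorWithinEval {n : ℕ} (hf : ContDiffAt ℝ (n + 1) f x) :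
    (fun z => f z - taylorWithinEval f n univ x z) =O[𝓝 x] fun z => (z - x) ^ (n + 1) := by
  have hnext := (ContDiffAt.isLittleO_sub_taylorWithinEval (n := n + 1)
    (by exact_mod_cast hf)).isBigO
  have hlast : (fun z => taylorWithinEval f (n + 1) univ x z - taylorWithinEval f n univ x z)
      =O[𝓝 x] fun z => (z - x) ^ (n + 1) := by
    simp only [taylorWithinEval_succ, add_sub_cancel_left]
    refine isBigO_of_le' (c := ‖((n + 1 : ℝ) * n.factorial)⁻¹‖ *
      ‖iteratedDerivWithin (n + 1) f univ x‖) _ fun z => ?_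
    rw [norm_smul, norm_mul, mul_right_comm]
  exact (hnext.add hlast).congr_left fun z => sub_add_sub_cancel _ _ _

theorem ContDiffAt.isBigO_sub_second_order_taylor (hf : ContDiffAt ℝ 3 f x) :
    (fun h => f (x + h) - (f x + h • deriv f x + (h ^ 2 / 2) • iteratedDeriv 2 f x))
      =O[𝓝 0] fun h => h ^ 3 := by
  have hx : Tendsto (x + ·) (𝓝 0) (𝓝 x) := by
    simpa using (continuous_const_add x).tendsto 0
  refine ((ContDiffAt.isBigO_sub_taylorWithinEval (n := 2) hf).comp_tendsto hx).congr
    (fun h => ?_) (fun h => by simp)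
  norm_num [taylor_within_apply, iteratedDerivWithin_univ, div_eq_inv_mul, mul_comm]

theorem ContDiffAt.isBigO_three_point_forward_diff_sub_deriv (hf : ContDiffAt ℝ 3 f x) :
    (fun h => (4 : ℝ) • f (x + h) - f (x + 2 * h) - (3 : ℝ) • f x - (2 * h) • deriv f x)
      =O[𝓝 0] fun h => h ^ 3 := by
  have hR := hf.isBigO_sub_second_order_taylor
  refine ((hR.const_smul_left (4 : ℝ)).sub (hR.comp_const_mul 2)).congr_left fun h => ?_
  simp only [Pi.smul_apply]
  module

theorem ContDiffAt.isBigO_three_point_backward_diff_add_deriv (hf : ContDiffAt ℝ 3 f x) :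
    (fun h => (4 : ℝ) • f (x - h) - f (x - 2 * h) - (3 : ℝ) • f x + (2 * h) • deriv f x)
      =O[𝓝 0] fun h => h ^ 3 := by
  refine ((hf.isBigO_three_point_forward_diff_sub_deriv.comp_const_mul (-1)).congr_left
    fun h => ?_).trans (isBigO_of_le _ fun h => ?_)
  · simp only [neg_one_mul, mul_neg, ← sub_eq_add_neg, neg_smul, sub_neg_eq_add]
  · simp

end Taylor

theorem five_point_vertical_interface_consistency_general
    (ξ y : ℝ) (v w : ℝ × ℝ → ℝ) (s : Set (ℝ × ℝ)) (hs : IsOpen s) (hmem : (ξ, y) ∈ s)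
    (hv : ContDiffOn ℝ 3 v s) (hw : ContDiffOn ℝ 3 w s)
    (aminus aplus : ℝ)
    (hjump : v (ξ, y) = w (ξ, y))
    (hflux : aplus * deriv (fun t => w (t, y)) ξ = aminus * deriv (fun t => v (t, y)) ξ) :
    ∃ C > 0, ∃ δ > 0, ∀ h : ℝ, 0 < h → h < δ →
      |-aminus * v (ξ - 2 * h, y) + 4 * aminus * v (ξ - h, y)
        - 3 * (aminus + aplus) * v (ξ, y)
        + 4 * aplus * w (ξ + h, y) - aplus * w (ξ + 2 * h, y)| ≤ C * h ^ 3 := by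
  have hline : ContDiff ℝ 3 fun t : ℝ => (t, y) := contDiff_id.prodMk contDiff_const
  have hV : ContDiffAt ℝ 3 (fun t => v (t, y)) ξ :=
    (hv.contDiffAt (hs.mem_nhds hmem)).comp ξ hline.contDiffAt
  have hW : ContDiffAt ℝ 3 (fun t => w (t, y)) ξ :=
    (hw.contDiffAt (hs.mem_nhds hmem)).comp ξ hline.contDiffAt
  have hresidual := (hV.isBigO_three_point_backward_diff_add_deriv.const_mul_left aminus).add
    (hW.isBigO_three_point_forward_diff_sub_deriv.const_mul_left aplus)
  have hscheme : (fun h => -aminus * v (ξ - 2 * h, y) + 4 * aminus * v (ξ - h, y)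
      - 3 * (aminus + aplus) * v (ξ, y)
      + 4 * aplus * w (ξ + h, y) - aplus * w (ξ + 2 * h, y)) =O[𝓝 0] fun h => h ^ 3 :=
    hresidual.congr_left fun h => by
      simp only [smul_eq_mul]
      linear_combination (3 * aplus) * hjump - (2 * h) * hflux
  simpa only [Real.norm_eq_abs] using hscheme.exists_bound_pow_of_pos

/-- Consistency of the 5-point interface finite difference scheme at a grid point on a
vertical interface line `x = ξ`: if `v`, `w` are three times continuously differentiable
smooth extensions of the solution from the left and right sides, satisfying the
homogeneous jump conditions `v(ξ,y) = w(ξ,y)` and `a⁺ ∂w/∂x(ξ,y) = a⁻ ∂v/∂x(ξ,y)`, then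
`-a⁻ v(ξ-2h,y) + 4a⁻ v(ξ-h,y) - 3(a⁻+a⁺) v(ξ,y) + 4a⁺ w(ξ+h,y) - a⁺ w(ξ+2h,y) = O(h³)`. -/
theorem five_point_vertical_interface_consistency
    (ξ y : ℝ) (v w : ℝ × ℝ → ℝ) (s : Set (ℝ × ℝ)) (hs : IsOpen s) (hmem : (ξ, y) ∈ s)
    (hv : ContDiffOn ℝ 3 v s) (hw : ContDiffOn ℝ 3 w s)
    (aminus aplus : ℝ) (haminus : 0 < aminus) (haplus : 0 < aplus)
    (hjump : v (ξ, y) = w (ξ, y))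
    (hflux : aplus * deriv (fun t => w (t, y)) ξ = aminus * deriv (fun t => v (t, y)) ξ) :
    ∃ C > 0, ∃ δ > 0, ∀ h : ℝ, 0 < h → h < δ →
      |-aminus * v (ξ - 2 * h, y) + 4 * aminus * v (ξ - h, y)
        - 3 * (aminus + aplus) * v (ξ, y)
        + 4 * aplus * w (ξ + h, y) - aplus * w (ξ + 2 * h, y)| ≤ C * h ^ 3 :=
  five_point_vertical_interface_consistency_general ξ y v w s hs hmem hv hw aminus aplus hjump hflux
end

section
/- Let ζ ∈ ℝ and let v, w : ℝ² → ℝ be three times continuously differentiable on an open neighborhood of the point (x, ζ). Let a⁻, a⁺ > 0 be real constants. Assume the homogeneous jump conditions at (x, ζ): v(x, ζ) = w(x, ζ) (zero jump of u) and a⁺·∂w/∂y(x,ζ) = a⁻·∂v/∂y(x,ζ) (zero jump of the flux a·∂u/∂y across the horizontal interface). Then there exist constants C > 0 and δ > 0 such that for all h with 0 < h < δ, | −a⁻·v(x, ζ−2h) + 4·a⁻·v(x, ζ−h) − 3·(a⁻ + a⁺)·v(x, ζ) + 4·a⁺·w(x, ζ+h) − a⁺·w(x, ζ+2h) | ≤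 C·h³. -/
/-!
Restrict `v` and `w` to the vertical line through `x`, obtaining `C³` functions `f` and `g` of `y`.
Expanding `f (ζ - 2h)`, `f (ζ - h)`, `g (ζ + h)`, `g (ζ + 2h)` to second order around `ζ`, the
residual of the scheme is `3a⁺ (g ζ - f ζ) + 2h (a⁺ g' ζ - a⁻ f' ζ) + O(h³)`: the second-order
terms cancel for every `f`, `g` by the choice of weights, and the two remaining terms are the jumps
of `u` and of the flux, which vanish.
-/

open Asymptotics Filter Topology Nat

theorem ContDiffAt.isBigO_sub_taylor {E : Type*} [NormedAddCommGroup E] [NormedSpace ℝ E]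
    {f : ℝ → E} {a : ℝ} {n : ℕ} (hf : ContDiffAt ℝ (n + 1) f a) :
    (fun t => f (a + t) - ∑ k ∈ Finset.range (n + 1), ((k ! : ℝ)⁻¹ * t ^ k) • iteratedDeriv k f a)
      =O[𝓝 0] fun t => t ^ (n + 1) := by
  obtain ⟨u, hu, hfu⟩ := hf.contDiffOn le_rfl (by simp)
  obtain ⟨ε, hε, hball⟩ := Metric.mem_nhds_iff.1 hu
  have hlittle := taylor_isLittleO (convex_ball a ε) (Metric.mem_ball_self hε)
    (n := n + 1) (by exact_mod_cast hfu.mono hball)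
  rw [nhdsWithin_eq_nhds.2 (Metric.ball_mem_nhds a hε)] at hlittle
  have hlead : (fun x => ((((n : ℝ) + 1) * n !)⁻¹ * (x - a) ^ (n + 1)) •
      iteratedDerivWithin (n + 1) f (Metric.ball a ε) a) =O[𝓝 a] fun x => (x - a) ^ (n + 1) :=
    isBigO_of_le' (c := ‖(((n : ℝ) + 1) * n !)⁻¹‖ *
      ‖iteratedDerivWithin (n + 1) f (Metric.ball a ε) a‖) _ fun x => le_of_eq (by rw [norm_smul, norm_mul]; ring)
  have hrem : (fun x => f x - taylorWithinEval f n (Metric.ball a ε) a x)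
      =O[𝓝 a] fun x => (x - a) ^ (n + 1) :=
    (hlittle.isBigO.add hlead).congr_left fun x => by rw [taylorWithinEval_succ]; abel
  have htend : Tendsto (fun t => a + t) (𝓝 0) (𝓝 a) := by
    simpa using (continuous_const_add a).tendsto 0
  refine (hrem.comp_tendsto htend).congr (fun t => ?_) (fun t => by simp)
  simp only [Function.comp_apply, taylor_within_apply, add_sub_cancel_left]
  congr 1
  refine Finset.sum_congr rfl fun k _ => ?_
  rw [iteratedDerivWithin_of_isOpen Metric.isOpen_ball (Metric.mem_ball_self hε)]

theorem Asymptotics.IsBigO.comp_const_mul_pow {F : ℝ → ℝ} {n : ℕ} (hF : F =O[𝓝 0] fun t => t ^ n)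
    (c : ℝ) : (fun t => F (c * t)) =O[𝓝 0] fun t => t ^ n := by
  have htend : Tendsto (fun t : ℝ => c * t) (𝓝 0) (𝓝 0) := by
    simpa using (continuous_const_mul c).tendsto 0
  refine (hF.comp_tendsto htend).trans ?_
  simp only [Function.comp_def, mul_pow]
  exact (isBigO_refl _ _).const_mul_left _

def fivePointResidual (f g : ℝ → ℝ) (ζ aminus aplus h : ℝ) : ℝ :=
  -aminus * f (ζ - 2 * h) + 4 * aminus * f (ζ - h) - 3 * (aminus + aplus) * f ζ
    + 4 * aplus * g (ζ + h) - aplus * g (ζ + 2 * h)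

theorem isBigO_fivePointResidual {f g : ℝ → ℝ} {ζ : ℝ} (hf : ContDiffAt ℝ 3 f ζ)
    (hg : ContDiffAt ℝ 3 g ζ) {aminus aplus : ℝ} (hjump : f ζ = g ζ)
    (hflux : aplus * deriv g ζ = aminus * deriv f ζ) :
    fivePointResidual f g ζ aminus aplus =O[𝓝 0] fun h => h ^ 3 := by
  have hf₃ := hf.isBigO_sub_taylor (n := 2)
  have hg₃ := hg.isBigO_sub_taylor (n := 2)
  simp only [Finset.sum_range_succ, Finset.sum_range_zero, smul_eq_mul, iteratedDeriv_zero,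
    iteratedDeriv_succ] at hf₃ hg₃
  refine ((((hf₃.comp_const_mul_pow (-2)).const_mul_left (-aminus)).add
    ((hf₃.comp_const_mul_pow (-1)).const_mul_left (4 * aminus))).add
    ((hg₃.comp_const_mul_pow 1).const_mul_left (4 * aplus))).sub
    ((hg₃.comp_const_mul_pow 2).const_mul_left aplus) |>.congr_left fun h => ?_
  simp only [fivePointResidual, Nat.factorial]
  ring_nf
  linear_combination (3 * aplus) * hjump - (2 * h) * hflux

theorem Asymptotics.IsBigO.exists_pos_bound_pow {F : ℝ → ℝ} {n : ℕ}
    (hF : F =O[𝓝 0] fun h => h ^ n) :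
    ∃ C > 0, ∃ δ > 0, ∀ h : ℝ, 0 < h → h < δ → |F h| ≤ C * h ^ n := by
  obtain ⟨C, hC, hCF⟩ := hF.exists_pos
  obtain ⟨δ, hδ, hball⟩ := Metric.eventually_nhds_iff.1 hCF.bound
  refine ⟨C, hC, δ, hδ, fun h h₀ hδh => ?_⟩
  have hdist : dist h 0 < δ := by rwa [Real.dist_0_eq_abs, abs_of_pos h₀]
  simpa [abs_of_pos h₀] using hball hdist

theorem five_point_horizontal_interface_consistency_general
    (x ζ : ℝ) (v w : ℝ × ℝ → ℝ) (s : Set (ℝ × ℝ)) (hs : IsOpen s) (hmem : (x, ζ) ∈ s)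
    (hv : ContDiffOn ℝ 3 v s) (hw : ContDiffOn ℝ 3 w s)
    (aminus aplus : ℝ)
    (hjump : v (x, ζ) = w (x, ζ))
    (hflux : aplus * deriv (fun t => w (x, t)) ζ = aminus * deriv (fun t => v (x, t)) ζ) :
    ∃ C > 0, ∃ δ > 0, ∀ h : ℝ, 0 < h → h < δ →
      |-aminus * v (x, ζ - 2 * h) + 4 * aminus * v (x, ζ - h)
        - 3 * (aminus + aplus) * v (x, ζ)
        + 4 * aplus * w (x, ζ + h) - aplus * w (x, ζ + 2 * h)| ≤ C * h ^ 3 := by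
  have hline : ContDiffAt ℝ 3 (fun t : ℝ => (x, t)) ζ := contDiffAt_const.prodMk contDiffAt_id
  have hf : ContDiffAt ℝ 3 (fun t => v (x, t)) ζ :=
    (hv.contDiffAt (hs.mem_nhds hmem)).comp ζ hline
  have hg : ContDiffAt ℝ 3 (fun t => w (x, t)) ζ :=
    (hw.contDiffAt (hs.mem_nhds hmem)).comp ζ hline
  exact (isBigO_fivePointResidual hf hg hjump hflux).exists_pos_bound_pow

/-- Consistency of the 5-point interface finite difference scheme at a grid point on a
horizontal interface line `y = ζ`: if `v`, `w` are three times continuously differentiable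
smooth extensions of the solution from the lower and upper sides, satisfying the
homogeneous jump conditions `v(x,ζ) = w(x,ζ)` and `a⁺ ∂w/∂y(x,ζ) = a⁻ ∂v/∂y(x,ζ)`, then
`-a⁻ v(x,ζ-2h) + 4a⁻ v(x,ζ-h) - 3(a⁻+a⁺) v(x,ζ) + 4a⁺ w(x,ζ+h) - a⁺ w(x,ζ+2h) = O(h³)`. -/
theorem five_point_horizontal_interface_consistency
    (x ζ : ℝ) (v w : ℝ × ℝ → ℝ) (s : Set (ℝ × ℝ)) (hs : IsOpen s) (hmem : (x, ζ) ∈ s)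
    (hv : ContDiffOn ℝ 3 v s) (hw : ContDiffOn ℝ 3 w s)
    (aminus aplus : ℝ) (haminus : 0 < aminus) (haplus : 0 < aplus)
    (hjump : v (x, ζ) = w (x, ζ))
    (hflux : aplus * deriv (fun t => w (x, t)) ζ = aminus * deriv (fun t => v (x, t)) ζ) :
    ∃ C > 0, ∃ δ > 0, ∀ h : ℝ, 0 < h → h < δ →
      |-aminus * v (x, ζ - 2 * h) + 4 * aminus * v (x, ζ - h)
        - 3 * (aminus + aplus) * v (x, ζ)
        + 4 * aplus * w (x, ζ + h) - aplus * w (x, ζ + 2 * h)| ≤ C * h ^ 3 :=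
  five_point_horizontal_interface_consistency_general x ζ v w s hs hmem hv hw aminus aplus hjump
    hflux
end

section
/- Let ξ ∈ ℝ and let v, w : ℝ → ℝ be three times continuously differentiable on an open interval containing ξ. Let a⁻, a⁺ > 0 be real constants, and assume v(ξ) = w(ξ) and a⁺·w′(ξ) = a⁻·v′(ξ). Then there exist constants C > 0 and δ > 0 such that for all h with 0 < h < δ, | (1/(2h))·( a⁺·(−3·w(ξ) + 4·w(ξ+h) − w(ξ+2h)) − a⁻·(3·v(ξ) − 4·v(ξ−h) + v(ξ−2h)) ) | ≤ C·h². -/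
/-!
Expanding `f (x + h) = f x + f' x h + c h² + O(h³)`, the three-point one-sided stencil
`-3 f x + 4 f (x + h) - f (x + 2h)` kills the constant and quadratic terms and leaves
`2 h f' x + O(h³)`; the backward stencil is the same one with step `-h`. Hence the combined
numerator equals `2h (a⁺ w' ξ - a⁻ v' ξ) + O(h³) = O(h³)` by the flux condition, and dividing
by `2h` gives `O(h²)`.
-/

open Asymptotics Filter Topology

theorem exists_isBigO_sub_taylor_two {f : ℝ → ℝ} {s : Set ℝ} {x : ℝ} (hs : Convex ℝ s)
    (hsx : s ∈ 𝓝 x) (hf : ContDiffOn ℝ 3 f s) :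
    ∃ c, (fun h ↦ f (x + h) - f x - deriv f x * h - c * h ^ 2) =O[𝓝 0] (· ^ 3) := by
  have htaylor := taylor_isLittleO hs (mem_of_mem_nhds hsx) hf
  rw [nhdsWithin_eq_nhds.mpr hsx] at htaylor
  have hshift : Tendsto (x + ·) (𝓝 0) (𝓝 x) := by
    simpa using (continuous_const_add x).tendsto 0
  refine ⟨iteratedDerivWithin 2 f s x / 2, ?_⟩
  have hcubic : (fun h : ℝ ↦ iteratedDerivWithin 3 f s x / 6 * h ^ 3) =O[𝓝 0] (· ^ 3) :=
    isBigO_const_mul_self _ _ _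
  have hrem : (fun h ↦ f (x + h) - taylorWithinEval f 3 s x (x + h)) =O[𝓝 0] (· ^ 3) :=
    (htaylor.comp_tendsto hshift).isBigO.congr_right fun h ↦ by simp
  refine (hrem.add hcubic).congr_left fun h ↦ ?_
  simp only [taylor_within_apply, Finset.sum_range_succ, Finset.sum_range_zero,
    iteratedDerivWithin_zero, iteratedDerivWithin_one, derivWithin_of_mem_nhds hsx, smul_eq_mul]
  norm_num [Nat.factorial]
  ring

theorem isBigO_forward_stencil {f : ℝ → ℝ} {x d c : ℝ}
    (hf : (fun h ↦ f (x + h) - f x - d * h - c * h ^ 2) =O[𝓝 0] (· ^ 3)) :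
    (fun h ↦ -3 * f x + 4 * f (x + h) - f (x + 2 * h) - 2 * d * h) =O[𝓝 0] (· ^ 3) := by
  have hdouble : Tendsto (2 * ·) (𝓝 (0 : ℝ)) (𝓝 0) := by
    simpa using (continuous_const_mul (2 : ℝ)).tendsto 0
  have hcube : (fun h : ℝ ↦ (2 * h) ^ 3) =O[𝓝 0] (· ^ 3) :=
    isBigO_const_mul_self (8 : ℝ) (· ^ 3) (𝓝 0) |>.congr_left fun h ↦ by ring
  have hf2 := (hf.comp_tendsto hdouble).trans hcube
  refine ((hf.const_mul_left 4).sub hf2).congr_left fun h ↦ ?_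
  simp only [Function.comp_apply]
  ring

theorem isBigO_backward_stencil {f : ℝ → ℝ} {x d c : ℝ}
    (hf : (fun h ↦ f (x + h) - f x - d * h - c * h ^ 2) =O[𝓝 0] (· ^ 3)) :
    (fun h ↦ 3 * f x - 4 * f (x - h) + f (x - 2 * h) - 2 * d * h) =O[𝓝 0] (· ^ 3) := by
  have hneg : Tendsto (fun h : ℝ ↦ -h) (𝓝 0) (𝓝 0) := by
    simpa using continuous_neg.tendsto (0 : ℝ)
  refine ((isBigO_forward_stencil hf).comp_tendsto hneg).neg_left.trans ?_ |>.congr_left ?_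
  · exact (isBigO_refl _ _).neg_left.congr_left fun h ↦ by simp only [Function.comp_apply]; ring
  · intro h
    simp only [Function.comp_apply, ← sub_eq_add_neg, mul_neg]
    ring

theorem exists_pos_abs_le_of_isBigO_pow {N : ℝ → ℝ} {n : ℕ} (hN : N =O[𝓝 0] (· ^ n)) :
    ∃ C > 0, ∃ δ > 0, ∀ h : ℝ, |h| < δ → |N h| ≤ C * |h| ^ n := by
  obtain ⟨C, hC, hCN⟩ := hN.exists_pos
  obtain ⟨δ, hδ, hbound⟩ := Metric.eventually_nhds_iff.mp hCN.bound
  refine ⟨C, hC, δ, hδ, fun h hh ↦ ?_⟩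
  simpa using hbound (by simpa using hh)

theorem one_dim_interface_consistency_general
    (ξ a b : ℝ) (haξ : a < ξ) (hξb : ξ < b) (v w : ℝ → ℝ)
    (hv : ContDiffOn ℝ 3 v (Set.Ioo a b)) (hw : ContDiffOn ℝ 3 w (Set.Ioo a b))
    (aminus aplus : ℝ) (hflux : aplus * deriv w ξ = aminus * deriv v ξ) :
    ∃ C > 0, ∃ δ > 0, ∀ h : ℝ, 0 < h → h < δ →
      |(1 / (2 * h)) * (aplus * (-3 * w ξ + 4 * w (ξ + h) - w (ξ + 2 * h))
        - aminus * (3 * v ξ - 4 * v (ξ - h) + v (ξ - 2 * h)))| ≤ C * h ^ 2 := by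
  have hI : Set.Ioo a b ∈ 𝓝 ξ := Ioo_mem_nhds haξ hξb
  obtain ⟨cw, hw₂⟩ := exists_isBigO_sub_taylor_two (convex_Ioo a b) hI hw
  obtain ⟨cv, hv₂⟩ := exists_isBigO_sub_taylor_two (convex_Ioo a b) hI hv
  have hscheme : (fun h ↦ aplus * (-3 * w ξ + 4 * w (ξ + h) - w (ξ + 2 * h))
      - aminus * (3 * v ξ - 4 * v (ξ - h) + v (ξ - 2 * h))) =O[𝓝 0] (· ^ 3) :=
    ((isBigO_forward_stencil hw₂).const_mul_left aplus).sub
      ((isBigO_backward_stencil hv₂).const_mul_left aminus) |>.congr_left fun h ↦ by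
        linear_combination (-(2 * h)) * hflux
  obtain ⟨C, hC, δ, hδ, hbound⟩ := exists_pos_abs_le_of_isBigO_pow hscheme
  refine ⟨C / 2, by positivity, δ, hδ, fun h hh hhδ ↦ ?_⟩
  have hN := hbound h (by rwa [abs_of_pos hh])
  rw [abs_of_pos hh] at hN
  rw [abs_mul, abs_of_pos (by positivity : 0 < 1 / (2 * h))]
  calc 1 / (2 * h) * |_| ≤ 1 / (2 * h) * (C * h ^ 3) := by gcongr
    _ = C / 2 * h ^ 2 := by field_simp

/-- One-dimensional interface consistency: if `v`, `w` are three times continuously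
differentiable on an open interval containing the interface point `ξ`, with
`v(ξ) = w(ξ)` and `a⁺ w'(ξ) = a⁻ v'(ξ)`, then the combination of the 3-point
backward and forward upwind schemes approximating the (zero) flux jump satisfies
`(1/(2h)) (a⁺(-3w(ξ) + 4w(ξ+h) - w(ξ+2h)) - a⁻(3v(ξ) - 4v(ξ-h) + v(ξ-2h))) = O(h²)`. -/
theorem one_dim_interface_consistency
    (ξ a b : ℝ) (haξ : a < ξ) (hξb : ξ < b) (v w : ℝ → ℝ)
    (hv : ContDiffOn ℝ 3 v (Set.Ioo a b)) (hw : ContDiffOn ℝ 3 w (Set.Ioo a b))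
    (aminus aplus : ℝ) (haminus : 0 < aminus) (haplus : 0 < aplus)
    (hjump : v ξ = w ξ) (hflux : aplus * deriv w ξ = aminus * deriv v ξ) :
    ∃ C > 0, ∃ δ > 0, ∀ h : ℝ, 0 < h → h < δ →
      |(1 / (2 * h)) * (aplus * (-3 * w ξ + 4 * w (ξ + h) - w (ξ + 2 * h))
        - aminus * (3 * v ξ - 4 * v (ξ - h) + v (ξ - 2 * h)))| ≤ C * h ^ 2 :=
  one_dim_interface_consistency_general ξ a b haξ hξb v w hv hw aminus aplus hflux
end
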